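/- Let (E,ℒ) be a labeled graph satisfying the standing assumptions with ℰ the smallest normal accommodating set, and suppose (E,ℒ,ℰ) is disagreeable. Then every loop (α,A) with nonempty A ∈ ℰ has an exit. -/

import Mathlib

/-- The `n`-fold concatenation (power) `w^n` of a finite word `w`. -/
def wpow {Λ : Type*} (w : List Λ) (n : ℕ) : List Λ := (List.replicate n w).flatten

/-- The finite word `x_{[1,n]}` formed by the first `n` letters of an infinite word `x`. -/
def wordPrefix {Λ : Type*} (x : ℕ → Λ) (n : ℕ) : List Λ := (List.range n).map x

/-- A labeled graph `(E, ℒ)`: a directed graph with vertex set `V` and edge type `Edge`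
(with range and source maps), together with a surjective labeling map `lbl` onto the
alphabet `Λ`. -/
structure LabeledGraph (V : Type*) (Λ : Type*) where
  Edge : Type*
  src : Edge → V
  rng : Edge → V
  lbl : Edge → Λ
  lbl_surjective : Function.Surjective lbl

namespace LabeledGraph

variable {V : Type*} {Λ : Type*}

/-- `G.PathLabel u w α` holds iff there is a finite path `λ` of length `≥ 1` in the graph
with source `u`, range `w` and label word `ℒ(λ) = α`. -/
inductive PathLabel (G : LabeledGraph V Λ) : V → V → List Λ → Prop
  | single (e : G.Edge) : PathLabel G (G.src e) (G.rng e) [G.lbl e]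
  | cons (e : G.Edge) {w : V} {α : List Λ} :
      PathLabel G (G.rng e) w α → PathLabel G (G.src e) w (G.lbl e :: α)

variable (G : LabeledGraph V Λ)

/-- `α ∈ ℒ*(E)`: `α` is the label of some path of length `≥ 1`. -/
def IsLabel (α : List Λ) : Prop := ∃ u w, G.PathLabel u w α

/-- The relative range `r(A, α)` of `α` with respect to `A`. -/
def rel (A : Set V) (α : List Λ) : Set V := {w | ∃ u ∈ A, G.PathLabel u w α}

/-- `r(α) = r(E⁰, α)`. -/
def range' (α : List Λ) : Set V := G.rel Set.univ α

/-- `s(α)`: the set of sources of paths labeled `α`. -/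
def srcSet (α : List Λ) : Set V := {u | ∃ w, G.PathLabel u w α}

/-- `ℒ(AEⁿ)`: labels of paths of length `n` with source in `A`. -/
def lblFrom (A : Set V) (n : ℕ) : Set (List Λ) :=
  {α | α.length = n ∧ ∃ u ∈ A, ∃ w, G.PathLabel u w α}

/-- `ℒ(AE^{≥1})`: labels of paths of length `≥ 1` with source in `A`. -/
def lblFromGe (A : Set V) : Set (List Λ) := {α | ∃ u ∈ A, ∃ w, G.PathLabel u w α}

/-- `ℒ(EⁿA)`: labels of paths of length `n` with range in `A`. -/
def lblTo (A : Set V) (n : ℕ) : Set (List Λ) :=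
  {α | α.length = n ∧ ∃ u, ∃ w ∈ A, G.PathLabel u w α}

/-- The generalized vertex `[v]_l`: the set of vertices `w` receiving at least one edge
such that `ℒ(E^k w) = ℒ(E^k v)` for all `1 ≤ k ≤ l`. -/
def gv (v : V) (l : ℕ) : Set V :=
  {w | (∃ e : G.Edge, G.rng e = w) ∧
    ∀ k : ℕ, 1 ≤ k → k ≤ l → G.lblTo {w} k = G.lblTo {v} k}

/-- Membership in `ℰ`, the smallest collection of subsets of `E⁰` containing all ranges
`r(α)` and closed under relative ranges, finite intersections, finite unions and
relative complements (the smallest normal accommodating set). -/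
inductive memE : Set V → Prop
  | empty : memE ∅
  | range (α : List Λ) : α ≠ [] → memE (G.range' α)
  | relRange {A : Set V} (α : List Λ) : α ≠ [] → memE A → memE (G.rel A α)
  | inter {A C : Set V} : memE A → memE C → memE (A ∩ C)
  | union {A C : Set V} : memE A → memE C → memE (A ∪ C)
  | diff {A C : Set V} : memE A → memE C → memE (A \ C)

/-- The standing assumptions on the labeled space `(E, ℒ, ℰ)`: the graph has no sinks and
the labeled space is weakly left-resolving, set-finite and receiver set-finite. -/
structure Standing : Prop where
  no_sinks : ∀ u : V, ∃ e : G.Edge, G.src e = u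
  weakly_left_resolving : ∀ A C : Set V, G.memE A → G.memE C →
    ∀ α : List Λ, α ≠ [] → G.rel (A ∩ C) α = G.rel A α ∩ G.rel C α
  set_finite : ∀ A : Set V, G.memE A → ∀ k : ℕ, 1 ≤ k → (G.lblFrom A k).Finite
  receiver_set_finite : ∀ A : Set V, G.memE A → ∀ k : ℕ, 1 ≤ k → (G.lblTo A k).Finite

/-- `α` is agreeable for `[v]_l` (the condition only depends on `l`):
`α = βα' = α'γ` with `α', β, γ ∈ ℒ*(E)` and `|β| = |γ| ≤ l`. -/
def Agreeable (l : ℕ) (α : List Λ) : Prop :=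
  ∃ α' β γ : List Λ, G.IsLabel α' ∧ G.IsLabel β ∧ G.IsLabel γ ∧
    β.length = γ.length ∧ β.length ≤ l ∧ α = β ++ α' ∧ α = α' ++ γ

/-- `α` (a path with `s(α) ∩ [v]_l ≠ ∅`) is disagreeable for `[v]_l`. -/
def DisagreeableFor (v : V) (l : ℕ) (α : List Λ) : Prop :=
  (G.srcSet α ∩ G.gv v l).Nonempty ∧ ¬ G.Agreeable l α

/-- The generalized vertex `[v]_l` is disagreeable: there is `N ≥ 1` such that for every
`n > N` there is a path in `ℒ(E^{≥n})` which is disagreeable for `[v]_l`. -/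
def DisagreeableGV (v : V) (l : ℕ) : Prop :=
  ∃ N : ℕ, 1 ≤ N ∧ ∀ n : ℕ, N < n →
    ∃ α : List Λ, n ≤ α.length ∧ G.DisagreeableFor v l α

/-- The labeled space `(E, ℒ, ℰ)` is disagreeable. -/
def Disagreeable : Prop :=
  ∀ v : V, ∃ L : ℕ, 1 ≤ L ∧ ∀ l : ℕ, L ≤ l → G.DisagreeableGV v l

/-- `(α, A)` is a loop: `A ∈ ℰ` is nonempty, `α ∈ ℒ*(E)` and `A ⊆ r(A, α)`. -/
def IsLoop (α : List Λ) (A : Set V) : Prop :=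
  α ≠ [] ∧ G.memE A ∧ A.Nonempty ∧ A ⊆ G.rel A α

/-- The loop `(α, A)` has an exit: either (i) there is `β ∈ ℒ(AE^{|α|})` with `β ≠ α` and
`r(A, β) ≠ ∅`, or (ii) `A ⊊ r(A, α)`. -/
def HasExit (α : List Λ) (A : Set V) : Prop :=
  (∃ β : List Λ, β ∈ G.lblFrom A α.length ∧ β ≠ α ∧ (G.rel A β).Nonempty) ∨
    A ⊂ G.rel A α

/-- `A ∈ ℰ` is minimal: `A ≠ ∅` and `A ∩ C ∈ {A, ∅}` for every `C ∈ ℰ`. -/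
def MinimalSet (A : Set V) : Prop :=
  G.memE A ∧ A.Nonempty ∧ ∀ C : Set V, G.memE C → A ∩ C = A ∨ A ∩ C = ∅

/-- A set `Bset ⊆ E⁰` connects to a loop: there are a loop `(α, A)` and finitely many
paths `δ₁, …, δ_m ∈ ℒ*(E)`, none of which is an initial path of another, with
`A ⊆ ∪ᵢ r(Bset, δᵢ)`. -/
def ConnectsToLoop (Bset : Set V) : Prop :=
  ∃ (α : List Λ) (A : Set V), G.IsLoop α A ∧
    ∃ (m : ℕ) (δ : Fin m → List Λ), (∀ i, G.IsLabel (δ i)) ∧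
      (∀ i j, i ≠ j → ¬ (δ i <+: δ j)) ∧ A ⊆ ⋃ i, G.rel Bset (δ i)

/-- Every vertex connects to a loop: every generalized vertex `[v]_l` connects to a loop. -/
def EveryVertexConnectsToLoop : Prop :=
  ∀ (v : V) (l : ℕ), 1 ≤ l → (∃ e : G.Edge, G.rng e = v) →
    G.ConnectsToLoop (G.gv v l)

/-- The labeled space `(E, ℒ, ℰ)` is strongly cofinal. -/
def StronglyCofinal : Prop :=
  ∀ x : ℕ → Λ, (∀ n : ℕ, 1 ≤ n → G.IsLabel (wordPrefix x n)) →
    ∀ (v : V) (l : ℕ), (∃ e : G.Edge, G.rng e = v) → 1 ≤ l →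
      ∃ N : ℕ, 1 ≤ N ∧ ∃ (m : ℕ) (lam : Fin m → List Λ),
        (∀ i, G.IsLabel (lam i)) ∧
        G.range' (wordPrefix x N) ⊆ ⋃ i, G.rel (G.gv v l) (lam i)

/-- A subset `H ⊆ ℰ` is hereditary: it is closed under finite unions, relative ranges,
and subsets belonging to `ℰ`. -/
def IsHereditary (H : Set (Set V)) : Prop :=
  (∀ A ∈ H, G.memE A) ∧
  (∀ A ∈ H, ∀ C ∈ H, A ∪ C ∈ H) ∧
  (∀ A ∈ H, ∀ β : List Λ, G.IsLabel β → G.rel A β ∈ H) ∧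
  (∀ A ∈ H, ∀ C : Set V, G.memE C → C ⊆ A → C ∈ H)

/-- A subset `H ⊆ ℰ` is saturated: every `A ∈ ℰ` with `r(A, β) ∈ H` for all
`β ∈ ℒ*(E)` belongs to `H`. -/
def IsSaturated (H : Set (Set V)) : Prop :=
  ∀ A : Set V, G.memE A → (∀ β : List Λ, G.IsLabel β → G.rel A β ∈ H) → A ∈ H

end LabeledGraph

/-!
Suppose the loop `(α, A)` has no exit. Then every path leaving `A` is labeled by a prefix of
`ααα⋯`. Since `A ∈ ℰ` is a Boolean combination of ranges `r(β)`, for `v ∈ A` and `l` large the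
generalized vertex `[v]_l` lies in `A`. Hence every path from `[v]_l` longer than `|α|` has
period `|α| ≤ l`, so it is agreeable for `[v]_l`, contradicting disagreeability.
-/

theorem List.eq_append_take_of_prefix_append {Λ : Type*} {α δ : List Λ} (h : δ <+: α ++ δ)
    (hlen : α.length ≤ δ.length) : δ = α ++ δ.take (δ.length - α.length) := by
  conv_lhs => rw [List.prefix_iff_eq_take.1 h]
  rw [List.take_append, List.take_of_length_le hlen]

namespace LabeledGraph

variable {V : Type*} {Λ : Type*} (G : LabeledGraph V Λ)

section Paths

variable {G}

theorem PathLabel.ne_nil {u w : V} {β : List Λ} (h : G.PathLabel u w β) : β ≠ [] := by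
  cases h <;> simp

theorem PathLabel.append {u w w' : V} {β γ : List Λ} (hβ : G.PathLabel u w β)
    (hγ : G.PathLabel w w' γ) : G.PathLabel u w' (β ++ γ) := by
  induction hβ with
  | single e => exact .cons e hγ
  | cons e _ ih => exact .cons e (ih hγ)

theorem PathLabel.exists_of_append {u w : V} {β γ : List Λ} (hβ : β ≠ []) (hγ : γ ≠ [])
    (h : G.PathLabel u w (β ++ γ)) : ∃ w', G.PathLabel u w' β ∧ G.PathLabel w' w γ := by
  induction β generalizing u with
  | nil => contradiction
  | cons a β ih =>
    generalize hδ : (a :: β) ++ γ = δ at h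
    cases h with
    | single e => simp_all
    | cons e hp =>
      obtain ⟨rfl, rfl⟩ := List.cons_eq_cons.1 hδ
      rcases eq_or_ne β [] with rfl | hβ'
      · exact ⟨_, .single e, hp⟩
      · obtain ⟨w', h₁, h₂⟩ := ih hβ' hp
        exact ⟨w', .cons e h₁, h₂⟩

theorem PathLabel.exists_extend (hns : ∀ u : V, ∃ e : G.Edge, G.src e = u) {u w : V}
    {δ : List Λ} (hδ : G.PathLabel u w δ) (k : ℕ) :
    ∃ w' δ', δ <+: δ' ∧ δ'.length = δ.length + k ∧ G.PathLabel u w' δ' := by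
  induction k with
  | zero => exact ⟨w, δ, List.prefix_refl δ, rfl, hδ⟩
  | succ k ih =>
    obtain ⟨w', δ', hpre, hlen, hp⟩ := ih
    obtain ⟨e, rfl⟩ := hns w'
    exact ⟨_, δ' ++ [G.lbl e], hpre.trans (List.prefix_append _ _), by simp [hlen]; omega,
      hp.append (.single e)⟩

end Paths

section RelativeRanges

theorem rel_empty (β : List Λ) : G.rel ∅ β = ∅ := by
  ext w; simp [rel]

theorem rel_union (A C : Set V) (β : List Λ) : G.rel (A ∪ C) β = G.rel A β ∪ G.rel C β := by
  ext w
  simp only [rel, Set.mem_union, Set.mem_ofPred_eq, or_and_right, exists_or]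

theorem rel_range' {β γ : List Λ} (hβ : β ≠ []) (hγ : γ ≠ []) :
    G.rel (G.range' β) γ = G.range' (β ++ γ) := by
  ext w
  constructor
  · rintro ⟨u, ⟨u₀, -, hβ⟩, hγ⟩
    exact ⟨u₀, trivial, hβ.append hγ⟩
  · rintro ⟨u₀, -, h⟩
    obtain ⟨u, h₁, h₂⟩ := h.exists_of_append hβ hγ
    exact ⟨u, ⟨u₀, trivial, h₁⟩, h₂⟩

theorem rel_diff (hS : G.Standing) {A C : Set V} (hA : G.memE A) (hC : G.memE C)
    {β : List Λ} (hβ : β ≠ []) : G.rel (A \ C) β = G.rel A β \ G.rel C β := by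
  ext w
  constructor
  · rintro ⟨u, ⟨huA, huC⟩, hp⟩
    refine ⟨⟨u, huA, hp⟩, fun hwC => ?_⟩
    have h : w ∈ G.rel ((A \ C) ∩ C) β := by
      rw [hS.weakly_left_resolving _ _ (.diff hA hC) hC β hβ]
      exact ⟨⟨u, ⟨huA, huC⟩, hp⟩, hwC⟩
    rwa [Set.sdiff_inter_self, rel_empty] at h
  · rintro ⟨⟨u, hu, hp⟩, hwC⟩
    exact ⟨u, ⟨hu, fun huC => hwC ⟨u, huC, hp⟩⟩, hp⟩

theorem mem_range'_iff_mem_lblTo {w : V} {β : List Λ} :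
    w ∈ G.range' β ↔ β ∈ G.lblTo {w} β.length := by
  simp [range', rel, lblTo]

end RelativeRanges

section BooleanRanges

/-- The Boolean algebra generated by the ranges `r(β)`; under the standing assumptions it is
all of `ℰ` (`memE.memBool`). -/
inductive memBool : Set V → Prop
  | empty : memBool ∅
  | range (β : List Λ) : β ≠ [] → memBool (G.range' β)
  | inter {A C : Set V} : memBool A → memBool C → memBool (A ∩ C)
  | union {A C : Set V} : memBool A → memBool C → memBool (A ∪ C)
  | diff {A C : Set V} : memBool A → memBool C → memBool (A \ C)

variable {G}

theorem memBool.memE {A : Set V} (h : G.memBool A) : G.memE A := by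
  induction h with
  | empty => exact .empty
  | range β hβ => exact .range β hβ
  | inter _ _ hA hC => exact .inter hA hC
  | union _ _ hA hC => exact .union hA hC
  | diff _ _ hA hC => exact .diff hA hC

theorem memBool.rel (hS : G.Standing) {A : Set V} (h : G.memBool A) {β : List Λ}
    (hβ : β ≠ []) : G.memBool (G.rel A β) := by
  induction h with
  | empty => rw [rel_empty]; exact .empty
  | range γ hγ => rw [rel_range' G hγ hβ]; exact .range _ (by simp [hγ])
  | inter hA hC ihA ihC =>
    rw [hS.weakly_left_resolving _ _ hA.memE hC.memE β hβ]; exact .inter ihA ihC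
  | union _ _ ihA ihC => rw [rel_union]; exact .union ihA ihC
  | diff hA hC ihA ihC => rw [rel_diff G hS hA.memE hC.memE hβ]; exact .diff ihA ihC

theorem memE.memBool (hS : G.Standing) {A : Set V} (h : G.memE A) : G.memBool A := by
  induction h with
  | empty => exact .empty
  | range β hβ => exact .range β hβ
  | relRange β hβ _ ih => exact ih.rel hS hβ
  | inter _ _ hA hC => exact .inter hA hC
  | union _ _ hA hC => exact .union hA hC
  | diff _ _ hA hC => exact .diff hA hC

open Filter in
theorem memBool.eventually_mem_gv_iff {A : Set V} (h : G.memBool A) (v : V) :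
    ∀ᶠ l in atTop, ∀ w ∈ G.gv v l, w ∈ A ↔ v ∈ A := by
  induction h with
  | empty => simp
  | range β hβ =>
    filter_upwards [eventually_ge_atTop β.length] with l hl w hw
    rw [mem_range'_iff_mem_lblTo, mem_range'_iff_mem_lblTo,
      hw.2 β.length (List.length_pos_iff.2 hβ) hl]
  | inter _ _ ihA ihC =>
    filter_upwards [ihA, ihC] with l hA hC w hw
    simp only [Set.mem_inter_iff, hA w hw, hC w hw]
  | union _ _ ihA ihC =>
    filter_upwards [ihA, ihC] with l hA hC w hw
    simp only [Set.mem_union, hA w hw, hC w hw]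
  | diff _ _ ihA ihC =>
    filter_upwards [ihA, ihC] with l hA hC w hw
    simp only [Set.mem_sdiff, hA w hw, hC w hw]

end BooleanRanges

section Loops

variable {G}

/-- `δ <+: α ++ δ` says that `δ` is a prefix of `ααα⋯`. -/
theorem PathLabel.prefix_append_self_of_no_exit (hns : ∀ u : V, ∃ e : G.Edge, G.src e = u)
    {α : List Λ} {A : Set V} (hlbl : ∀ β ∈ G.lblFrom A α.length, β = α)
    (hrel : G.rel A α ⊆ A) {u w : V} {δ : List Λ} (hu : u ∈ A) (hδ : G.PathLabel u w δ) :
    δ <+: α ++ δ := by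
  rcases eq_or_ne α [] with rfl | hα
  · exact List.prefix_refl δ
  induction hn : δ.length using Nat.strong_induction_on generalizing u w δ with
  | _ n ih =>
  subst hn
  rcases le_or_gt δ.length α.length with hle | hlt
  · obtain ⟨w', δ', hpre, hlen, hp⟩ := hδ.exists_extend hns (α.length - δ.length)
    have hδ' : δ' = α := hlbl δ' ⟨by omega, u, hu, w', hp⟩
    exact (hδ' ▸ hpre).trans (List.prefix_append _ _)
  · have hsplit := List.take_append_drop α.length δ
    rw [← hsplit] at hδ
    have hα₀ := List.length_pos_iff.2 hα
    obtain ⟨w', h₁, h₂⟩ := hδ.exists_of_append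
      (by rw [← List.length_pos_iff, List.length_take]; omega)
      (by rw [← List.length_pos_iff, List.length_drop]; omega)
    have htake : δ.take α.length = α := hlbl _ ⟨by simp; omega, u, hu, w', h₁⟩
    have hdrop := ih _ (by simp; omega) (hrel ⟨u, hu, htake ▸ h₁⟩) h₂ rfl
    rw [← hsplit, htake]
    exact (List.prefix_append_right_inj α).2 hdrop

theorem PathLabel.agreeable_of_prefix_append_self {u w : V} {α δ : List Λ} {l : ℕ}
    (hδ : G.PathLabel u w δ) (hper : δ <+: α ++ δ) (hα : G.IsLabel α)
    (hlen : α.length < δ.length) (hl : α.length ≤ l) : G.Agreeable l δ := by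
  obtain ⟨_, _, hα'⟩ := hα
  have hα₀ := List.length_pos_iff.2 hα'.ne_nil
  have hsplit := List.take_append_drop (δ.length - α.length) δ
  rw [← hsplit] at hδ
  obtain ⟨w', h₁, h₂⟩ := hδ.exists_of_append
    (by rw [← List.length_pos_iff, List.length_take]; omega)
    (by rw [← List.length_pos_iff, List.length_drop]; omega)
  exact ⟨_, α, _, ⟨_, _, h₁⟩, ⟨_, _, hα'⟩, ⟨_, _, h₂⟩, by simp; omega, hl,
    List.eq_append_take_of_prefix_append hper hlen.le, hsplit.symm⟩

end Loops

end LabeledGraph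

theorem stmt_5_general {V : Type*} {Λ : Type*}
    (G : LabeledGraph V Λ) (hS : G.Standing)
    (hd : G.Disagreeable) (α : List Λ) (A : Set V) (hloop : G.IsLoop α A) :
    G.HasExit α A := by
  obtain ⟨-, hAE, ⟨v, hv⟩, hAsub⟩ := hloop
  by_contra hno
  have hlbl : ∀ β ∈ G.lblFrom A α.length, β = α := fun β hβ => by_contra fun hne =>
    let ⟨_, u, hu, w, hp⟩ := hβ
    hno (.inl ⟨β, hβ, hne, w, u, hu, hp⟩)
  have hrel : G.rel A α ⊆ A := fun w hw => by_contra fun hwA =>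
    hno (.inr (hAsub.ssubset_of_not_subset fun h => hwA (h hw)))
  have hα : G.IsLabel α := let ⟨u, _, hp⟩ := hAsub hv; ⟨u, v, hp⟩
  obtain ⟨L, -, hL⟩ := hd v
  obtain ⟨l, ⟨N, -, hN⟩, hgv, hαl⟩ := ((Filter.eventually_atTop.2 ⟨L, hL⟩).and
    (((hAE.memBool hS).eventually_mem_gv_iff v).and (Filter.eventually_ge_atTop α.length))).exists
  obtain ⟨δ, hδlen, ⟨u, ⟨w, hδ⟩, hu⟩, hnag⟩ := hN (max N α.length + 1) (by omega)
  exact hnag (hδ.agreeable_of_prefix_append_self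
    (hδ.prefix_append_self_of_no_exit hS.no_sinks hlbl hrel ((hgv u hu).2 hv)) hα (by omega) hαl)

/-- If the labeled space `(E, ℒ, ℰ)` satisfies the standing assumptions and is
disagreeable, then every loop `(α, A)` (with nonempty `A ∈ ℰ`) has an exit. -/
theorem stmt_5 {V : Type*} {Λ : Type*} [Countable V] [Countable Λ]
    (G : LabeledGraph V Λ) [Countable G.Edge] (hS : G.Standing)
    (hd : G.Disagreeable) (α : List Λ) (A : Set V) (hloop : G.IsLoop α A) :
    G.HasExit α A :=
  stmt_5_general G hS hd α A hloop
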